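/- arXiv:math/9809058 — 3 statements merged into one kernel-verified Lean document; each statement's English description precedes it below -/
import Mathlib

section
/- Let Π be a convex body in a finite-dimensional real inner product space, and let F, G be facets of Π with corresponding perfect forms y_F, y_G, meaning: ⟨x, y_F⟩ = 1 for all x ∈ F, ⟨x, y_F⟩ > 1 for all x ∈ Π \ F, and similarly for G. Suppose F and G are neighbors, i.e. F ∩ G is a codimension-two face of Π whose affine span together with the origin spans a hyperplane. Let v be orthogonal to the linear span of F ∩ G with ⟨x, v⟩ ≥ 0 for all x ∈ F. Then there exists a unique ρ > 0 such that y_G = y_F + ρ v. -/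
open scoped RealInnerProductSpace

/-- Lemma (neighboring facets): if `F` and `G` are neighboring facets of `Π`
with perfect forms `y_F`, `y_G`, and `v` is orthogonal to the hyperplane spanned
by `F ∩ G`, nonnegative on `F`, then `y_G = y_F + ρ • v` for a unique `ρ > 0`. -/
theorem neighboring_facets
    {V : Type*} [NormedAddCommGroup V] [InnerProductSpace ℝ V]
    [FiniteDimensional ℝ V]
    (Pi F G : Set V) (hF : F ⊆ Pi) (hG : G ⊆ Pi)
    (yF yG v : V)
    (hyF1 : ∀ x ∈ F, ⟪x, yF⟫ = 1)
    (hyF2 : ∀ x ∈ Pi, x ∉ F → 1 < ⟪x, yF⟫)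
    (hyG1 : ∀ x ∈ G, ⟪x, yG⟫ = 1)
    (hyG2 : ∀ x ∈ Pi, x ∉ G → 1 < ⟪x, yG⟫)
    (hv0 : v ≠ 0)
    -- `v` spans the orthogonal complement of the hyperplane spanned by `F ∩ G`:
    (hvhyp : ∀ w : V, (∀ x ∈ F ∩ G, ⟪x, w⟫ = 0) → ∃ c : ℝ, w = c • v)
    (hvF : ∀ x ∈ F, 0 ≤ ⟪x, v⟫)
    (hne : yG ≠ yF)
    (hFnotG : ∃ x ∈ F, x ∉ F ∩ G) :
    ∃! ρ : ℝ, 0 < ρ ∧ yG = yF + ρ • v := by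
  obtain ⟨c, hc⟩ := hvhyp (yG - yF) (fun x hx => by
    rw [inner_sub_right, hyG1 x hx.2, hyF1 x hx.1]; ring)
  obtain ⟨x, hxF, hxFG⟩ := hFnotG
  have hxG : x ∉ G := fun h => hxFG ⟨hxF, h⟩
  have h1 : ⟪x, yF⟫ = 1 := hyF1 x hxF
  have h2 : (1:ℝ) < ⟪x, yG⟫ := hyG2 x (hF hxF) hxG
  have h3 : 0 < ⟪x, yG - yF⟫ := by rw [inner_sub_right, h1]; linarith
  rw [hc, real_inner_smul_right] at h3
  have hxv := hvF x hxF
  have hcpos : 0 < c := by nlinarith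
  refine ⟨c, ⟨hcpos, by rw [← hc]; abel⟩, ?_⟩
  rintro ρ ⟨hρ, hρeq⟩
  have : ρ • v = c • v := by
    have := hρeq.symm.trans (by rw [← hc]; abel : yG = yF + c • v)
    exact add_left_cancel this
  have hsub : (ρ - c) • v = 0 := by rw [sub_smul, this, sub_self]
  rcases smul_eq_zero.mp hsub with h | h
  · linarith [sub_eq_zero.mp (by linarith [h] : ρ - c = 0)]
  · exact absurd h hv0
end

section
/- With notation as in the neighboring-facets setup: let F be a facet of Π with perfect form y_F, E a maximal proper face of F, G the neighboring facet along E with y_G = y_F + ρ̄ v where ρ̄ > 0 and v satisfies ⟨x,v⟩ = 0 for x ∈ E and ⟨x,v⟩ ≥ 0 for x ∈ F. Define ρ(x) = (1 − ⟨x, y_F⟩)/⟨x, v⟩ and S = {x ∈ Z | ⟨x, v⟩ < 0 and y_F + ρ(x) v ∈ C}, where Z is the vertex set of Π. Then for every x ∈ S one has ρ(x) ≥ ρ̄. -/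
open scoped RealInnerProductSpace

/-- Lemma (min positive value): for every `x ∈ S`, `ρ(x) ≥ ρ̄`. -/
theorem rho_ge_rhobar
    {V : Type*} [NormedAddCommGroup V] [InnerProductSpace ℝ V]
    [FiniteDimensional ℝ V]
    (C : Set V) (Z : Set V) (hZC : Z ⊆ closure C)
    (yF yG v : V) (rhobar : ℝ) (hrhobar : 0 < rhobar)
    (hyG : yG = yF + rhobar • v)
    -- `y_G` is a perfect form for the facet `G` of `Π = conv Z`:
    -- in particular `⟨x, y_G⟩ ≥ 1` for every vertex `x ∈ Z`.
    (hyGperf : ∀ x ∈ Z, 1 ≤ ⟪x, yG⟫)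
    (x : V) (hxZ : x ∈ Z) (hxv : ⟪x, v⟫ < 0)
    (hxC : yF + ((1 - ⟪x, yF⟫) / ⟪x, v⟫) • v ∈ C) :
    rhobar ≤ (1 - ⟪x, yF⟫) / ⟪x, v⟫ := by
  have h := hyGperf x hxZ
  rw [hyG, inner_add_right, real_inner_smul_right] at h
  rw [le_div_iff_of_neg hxv]
  nlinarith
end

section
/- Let Π be the convex hull of a set Z of nonzero lattice points in the closure of a self-adjoint cone C, and suppose each facet F of Π has a perfect form y_F ∈ C with ⟨x,y_F⟩ = 1 on F, ⟨x,y_F⟩ > 1 on Π \ F. Fix x ∈ Π and μ ≥ 1 with μ ∈ π(y_F)(L), and let Σ = {y ∈ Π | ⟨y, y_F⟩ ≤ μ} for a fixed facet F. If {z ∈ Z | ⟨z, y_F⟩ ≤ μ} is finite, then Σ is a bounded subset of V. -/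
open scoped RealInnerProductSpace

/-- With `Π` the convex hull of the set `Z` of nonzero lattice points in the
closure of the self-adjoint cone `C`, and `y_F ∈ C` the perfect form of a facet
`F` of `Π`, if only finitely many `z ∈ Z` satisfy `⟨z, y_F⟩ ≤ μ`, then
`Σ = {y ∈ Π | ⟨y, y_F⟩ ≤ μ}` is bounded. -/
theorem slice_of_voronoi_polyhedron_bounded
    {V : Type*} [NormedAddCommGroup V] [InnerProductSpace ℝ V]
    [FiniteDimensional ℝ V]
    (C : Set V)
    (hopen : IsOpen C)
    (hcone : ∀ x ∈ C, ∀ t : ℝ, 0 < t → t • x ∈ C)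
    (hnoline : ¬ ∃ (x w : V), w ≠ 0 ∧ ∀ t : ℝ, x + t • w ∈ C)
    (hsa : C = {x : V | ∀ y ∈ closure C \ {0}, 0 < ⟪y, x⟫})
    (L : AddSubgroup V) (hLdisc : DiscreteTopology L)
    (hLfull : Submodule.span ℝ (L : Set V) = ⊤)
    (Z : Set V) (hZL : Z ⊆ (L : Set V) \ {0}) (hZC : Z ⊆ closure C)
    (yF : V) (hyF : yF ∈ C)
    -- `y_F` is a perfect form: it is `1` exactly on the facet `F` and `> 1`
    -- on the rest of `Π`; in particular `⟨z, y_F⟩ ≥ 1` on `Z`: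
    (hperf : ∀ z ∈ Z, 1 ≤ ⟪z, yF⟫)
    (μ : ℝ) (hμ : 1 ≤ μ)
    (hfin : {z ∈ Z | ⟪z, yF⟫ ≤ μ}.Finite) :
    Bornology.IsBounded {y ∈ convexHull ℝ Z | ⟪y, yF⟫ ≤ μ} := by
  -- yF pairs positively with every nonzero element of the closure of C
  have hpos : ∀ y ∈ closure C, y ≠ 0 → 0 < ⟪y, yF⟫ := by
    have h := hsa ▸ hyF
    intro y hy hy0
    exact h y ⟨hy, hy0⟩
  -- C is convex, hence so is its closure
  have hCconv : Convex ℝ C := by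
    rw [hsa]
    intro x hx y hy a b ha hb hab
    intro z hz
    have hp := hx z hz
    have hq := hy z hz
    simp only [inner_add_right, inner_smul_right]
    rcases eq_or_lt_of_le ha with h | h
    · have hb1 : b = 1 := by linarith
      rw [← h, hb1]; simpa using hq
    · nlinarith [mul_nonneg hb hq.le]
  have hclconv : Convex ℝ (closure C) := hCconv.closure
  have hhull : convexHull ℝ Z ⊆ closure C := convexHull_min hZC hclconv
  rcases Z.eq_empty_or_nonempty with hZ | ⟨z0, hz0⟩
  · subst hZ
    simp only [convexHull_empty]
    exact Bornology.IsBounded.subset Bornology.isBounded_empty (by intro y hy; exact hy.1)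
  · have hz0C : z0 ∈ closure C := hZC hz0
    have hz0ne : z0 ≠ 0 := (hZL hz0).2
    -- closure C is closed under positive scaling
    have hscale : ∀ y ∈ closure C, ∀ t : ℝ, 0 < t → t • y ∈ closure C := by
      intro y hy t ht
      have : Continuous fun x : V => t • x := continuous_const_smul t
      have h1 : t • y ∈ closure ((fun x : V => t • x) '' C) :=
        (this.continuousOn).image_closure ⟨y, hy, rfl⟩
      refine closure_mono ?_ h1
      rintro _ ⟨x, hx, rfl⟩
      exact hcone x hx t ht
    -- the compact set K
    set K := Metric.sphere (0 : V) 1 ∩ closure C with hK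
    have hKcomp : IsCompact K := (isCompact_sphere 0 1).inter_right isClosed_closure
    have hKne : K.Nonempty := by
      refine ⟨‖z0‖⁻¹ • z0, ?_, ?_⟩
      · simp [norm_smul, abs_inv, inv_mul_cancel₀ (norm_ne_zero_iff.mpr hz0ne)]
      · exact hscale z0 hz0C _ (inv_pos.mpr (norm_pos_iff.mpr hz0ne))
    obtain ⟨w, hwK, hwmin⟩ :=
      hKcomp.exists_isMinOn hKne
        ((Continuous.inner continuous_id continuous_const :
          Continuous fun t : V => ⟪t, yF⟫)).continuousOn
    have hwne : w ≠ 0 := by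
      intro h
      have := hwK.1
      rw [h] at this
      simp at this
    have hε : 0 < ⟪w, yF⟫ := hpos w hwK.2 hwne
    set ε := ⟪w, yF⟫
    -- key estimate
    have hkey : ∀ y ∈ closure C, ε * ‖y‖ ≤ ⟪y, yF⟫ := by
      intro y hy
      rcases eq_or_ne y 0 with rfl | hy0
      · simp
      · have hny : 0 < ‖y‖ := norm_pos_iff.mpr hy0
        have hu : ‖y‖⁻¹ • y ∈ K := by
          refine ⟨?_, hscale y hy _ (by positivity)⟩
          simp [norm_smul, abs_inv, inv_mul_cancel₀ hny.ne']
        have h1 : ε ≤ ⟪‖y‖⁻¹ • y, yF⟫ := hwmin hu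
        rw [real_inner_smul_left] at h1
        have h2 : ε * ‖y‖ ≤ (‖y‖⁻¹ * ⟪y, yF⟫) * ‖y‖ :=
          mul_le_mul_of_nonneg_right h1 hny.le
        rw [mul_assoc, mul_comm ⟪y, yF⟫, ← mul_assoc, inv_mul_cancel₀ hny.ne',
          one_mul] at h2
        exact h2
    refine (Metric.isBounded_closedBall (x := (0 : V)) (r := μ / ε)).subset ?_
    rintro y ⟨hyhull, hyμ⟩
    have hyC : y ∈ closure C := hhull hyhull
    have := hkey y hyC
    rw [Metric.mem_closedBall, dist_zero_right]
    rw [le_div_iff₀ hε, mul_comm]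
    linarith
end
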